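/- arXiv:1003.5511 — 2 statements merged into one kernel-verified Lean document; each statement's English description precedes it below -/
import Mathlib

section
/- Let C be a symmetric monoidal category with a natural number object N (in the Paré–Román sense: for any c : 1 → A and f : A → A there is a unique h : N → A with h ∘ 0 = c and h ∘ succ = f ∘ h). Then N carries a commutative comonoid structure: the unique morphisms w_N : N → 1 with w_N ∘ 0 = id_1 and w_N ∘ succ = w_N, and c_N : N → N ⊗ N with c_N ∘ 0 = (0 ⊗ 0) ∘ λ⁻¹ and c_N ∘ succ = (succ ⊗ succ) ∘ c_N, satisfy the commutative comonoid axioms. -/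
/-!
Each law equates two morphisms out of `N`. In every case both sides satisfy the same recursion
`zero ≫ h = x`, `succ ≫ h = h ≫ f` (with `f = succ` for the counit laws, `f = succ ⊗ succ` for
cocommutativity and `f = succ ⊗ (succ ⊗ succ)` for coassociativity), so they agree by the
uniqueness part of the universal property of `N`. The successor steps only use that `w` and `c`
intertwine `succ`; the base cases reduce to coherence for the unit object, e.g. `β_ 𝟙 𝟙 = 𝟙`.
-/

open CategoryTheory MonoidalCategory

universe v u

/-- A Paré–Román natural number object in a monoidal category: an object `N` with
`0 : 𝟙 ⟶ N` and `succ : N ⟶ N` such that for every `c : 𝟙 ⟶ A` and `f : A ⟶ A`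
there is a unique `h : N ⟶ A` with `h ∘ 0 = c` and `h ∘ succ = f ∘ h`. -/
structure NatNumObj (C : Type u) [Category.{v} C] [MonoidalCategory C] where
  N : C
  zero : 𝟙_ C ⟶ N
  succ : N ⟶ N
  universal : ∀ {A : C} (c : 𝟙_ C ⟶ A) (f : A ⟶ A),
    ∃! h : N ⟶ A, zero ≫ h = c ∧ succ ≫ h = h ≫ f

variable {C : Type u} [Category.{v} C] [MonoidalCategory C] [SymmetricCategory C]

omit [SymmetricCategory C] in
theorem NatNumObj.hom_ext (nno : NatNumObj C) {A : C} (f : A ⟶ A) {h₁ h₂ : nno.N ⟶ A}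
    (h0 : nno.zero ≫ h₁ = nno.zero ≫ h₂)
    (h₁s : nno.succ ≫ h₁ = h₁ ≫ f) (h₂s : nno.succ ≫ h₂ = h₂ ≫ f) : h₁ = h₂ :=
  (nno.universal _ f).unique ⟨rfl, h₁s⟩ ⟨h0.symm, h₂s⟩

section

omit [SymmetricCategory C]

variable {X X' Y Y' : C}

theorem tensorHom_whiskerRight_leftUnitor {f : X ⟶ X'} {u : X ⟶ 𝟙_ C} {u' : X' ⟶ 𝟙_ C}
    (h : f ≫ u' = u) (g : Y ⟶ Y') :
    (f ⊗ₘ g) ≫ u' ▷ Y' ≫ (λ_ Y').hom = u ▷ Y ≫ (λ_ Y).hom ≫ g := by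
  rw [tensorHom_comp_whiskerRight_assoc, h, tensorHom_def_assoc, leftUnitor_naturality]

theorem tensorHom_whiskerLeft_rightUnitor (f : X ⟶ X') {g : Y ⟶ Y'} {u : Y ⟶ 𝟙_ C}
    {u' : Y' ⟶ 𝟙_ C} (h : g ≫ u' = u) :
    (f ⊗ₘ g) ≫ X' ◁ u' ≫ (ρ_ X').hom = X ◁ u ≫ (ρ_ X).hom ≫ f := by
  rw [tensorHom_comp_whiskerLeft_assoc, h, tensorHom_def'_assoc, rightUnitor_naturality]

variable {Z₁ Z₂ Z₁' Z₂' : C}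

theorem tensorHom_whiskerRight_associator {f : X ⟶ X'} {d : X ⟶ Z₁ ⊗ Z₂}
    {d' : X' ⟶ Z₁' ⊗ Z₂'} {f₁ : Z₁ ⟶ Z₁'} {f₂ : Z₂ ⟶ Z₂'} (h : f ≫ d' = d ≫ (f₁ ⊗ₘ f₂))
    (g : Y ⟶ Y') :
    (f ⊗ₘ g) ≫ d' ▷ Y' ≫ (α_ Z₁' Z₂' Y').hom = d ▷ Y ≫ (α_ Z₁ Z₂ Y).hom ≫ (f₁ ⊗ₘ f₂ ⊗ₘ g) := by
  rw [tensorHom_comp_whiskerRight_assoc, h, ← whiskerRight_comp_tensorHom_assoc,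
    associator_naturality]

theorem tensorHom_whiskerLeft {g : Y ⟶ Y'} {d : Y ⟶ Z₁ ⊗ Z₂}
    {d' : Y' ⟶ Z₁' ⊗ Z₂'} {g₁ : Z₁ ⟶ Z₁'} {g₂ : Z₂ ⟶ Z₂'} (f : X ⟶ X')
    (h : g ≫ d' = d ≫ (g₁ ⊗ₘ g₂)) :
    (f ⊗ₘ g) ≫ X' ◁ d' = X ◁ d ≫ (f ⊗ₘ g₁ ⊗ₘ g₂) := by
  rw [tensorHom_comp_whiskerLeft, h, whiskerLeft_comp_tensorHom]

end

namespace NatNumObj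

variable {nno : NatNumObj C} {w : nno.N ⟶ 𝟙_ C} {c : nno.N ⟶ nno.N ⊗ nno.N}

omit [SymmetricCategory C]

theorem counit_comul (hw0 : nno.zero ≫ w = 𝟙 (𝟙_ C)) (hws : nno.succ ≫ w = w)
    (hc0 : nno.zero ≫ c = (λ_ (𝟙_ C)).inv ≫ (nno.zero ⊗ₘ nno.zero))
    (hcs : nno.succ ≫ c = c ≫ (nno.succ ⊗ₘ nno.succ)) :
    c ≫ w ▷ nno.N ≫ (λ_ nno.N).hom = 𝟙 nno.N := by
  refine nno.hom_ext nno.succ ?_ ?_ (by simp)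
  · simp [reassoc_of% hc0, tensorHom_whiskerRight_leftUnitor hw0]
  · simp [reassoc_of% hcs, tensorHom_whiskerRight_leftUnitor hws]

theorem comul_counit (hw0 : nno.zero ≫ w = 𝟙 (𝟙_ C)) (hws : nno.succ ≫ w = w)
    (hc0 : nno.zero ≫ c = (λ_ (𝟙_ C)).inv ≫ (nno.zero ⊗ₘ nno.zero))
    (hcs : nno.succ ≫ c = c ≫ (nno.succ ⊗ₘ nno.succ)) :
    c ≫ nno.N ◁ w ≫ (ρ_ nno.N).hom = 𝟙 nno.N := by
  refine nno.hom_ext nno.succ ?_ ?_ (by simp)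
  · simp [reassoc_of% hc0, tensorHom_whiskerLeft_rightUnitor _ hw0, unitors_inv_equal]
  · simp [reassoc_of% hcs, tensorHom_whiskerLeft_rightUnitor _ hws]

theorem comul_assoc (hc0 : nno.zero ≫ c = (λ_ (𝟙_ C)).inv ≫ (nno.zero ⊗ₘ nno.zero))
    (hcs : nno.succ ≫ c = c ≫ (nno.succ ⊗ₘ nno.succ)) :
    c ≫ c ▷ nno.N ≫ (α_ nno.N nno.N nno.N).hom = c ≫ nno.N ◁ c := by
  refine nno.hom_ext (nno.succ ⊗ₘ nno.succ ⊗ₘ nno.succ) ?_ ?_ ?_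
  · have coherence : (λ_ (𝟙_ C)).inv ≫ (λ_ (𝟙_ C)).inv ▷ 𝟙_ C ≫ (α_ _ _ _).hom =
        (λ_ (𝟙_ C)).inv ≫ 𝟙_ C ◁ (λ_ (𝟙_ C)).inv := by monoidal
    simp only [reassoc_of% hc0, tensorHom_whiskerRight_associator hc0,
      tensorHom_whiskerLeft _ hc0, reassoc_of% coherence]
  · simp only [reassoc_of% hcs, tensorHom_whiskerRight_associator hcs, Category.assoc]
  · simp only [reassoc_of% hcs, tensorHom_whiskerLeft _ hcs, Category.assoc]

theorem comul_comm [BraidedCategory C]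
    (hc0 : nno.zero ≫ c = (λ_ (𝟙_ C)).inv ≫ (nno.zero ⊗ₘ nno.zero))
    (hcs : nno.succ ≫ c = c ≫ (nno.succ ⊗ₘ nno.succ)) :
    c ≫ (β_ nno.N nno.N).hom = c := by
  refine nno.hom_ext (nno.succ ⊗ₘ nno.succ) ?_ ?_ hcs
  · simp [reassoc_of% hc0, hc0, unitors_inv_equal]
  · simp [reassoc_of% hcs]

end NatNumObj

/-- A natural number object in a symmetric monoidal category carries a commutative comonoid
structure, given by the unique `w_N : N ⟶ 𝟙` with `w_N ∘ 0 = id` and `w_N ∘ succ = w_N`, and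
the unique `c_N : N ⟶ N ⊗ N` with `c_N ∘ 0 = (0 ⊗ 0) ∘ λ⁻¹` and
`c_N ∘ succ = (succ ⊗ succ) ∘ c_N`. -/
theorem nno_commutative_comonoid (nno : NatNumObj C)
    (w : nno.N ⟶ 𝟙_ C)
    (hw0 : nno.zero ≫ w = 𝟙 (𝟙_ C)) (hws : nno.succ ≫ w = w)
    (c : nno.N ⟶ nno.N ⊗ nno.N)
    (hc0 : nno.zero ≫ c = (λ_ (𝟙_ C)).inv ≫ (nno.zero ⊗ₘ nno.zero))
    (hcs : nno.succ ≫ c = c ≫ (nno.succ ⊗ₘ nno.succ)) :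
    -- counit laws
    (c ≫ (w ▷ nno.N) ≫ (λ_ nno.N).hom = 𝟙 nno.N) ∧
    (c ≫ (nno.N ◁ w) ≫ (ρ_ nno.N).hom = 𝟙 nno.N) ∧
    -- coassociativity
    (c ≫ (c ▷ nno.N) ≫ (α_ nno.N nno.N nno.N).hom = c ≫ (nno.N ◁ c)) ∧
    -- cocommutativity
    (c ≫ (β_ nno.N nno.N).hom = c) :=
  ⟨NatNumObj.counit_comul hw0 hws hc0 hcs, NatNumObj.comul_counit hw0 hws hc0 hcs,
    NatNumObj.comul_assoc hc0 hcs, NatNumObj.comul_comm hc0 hcs⟩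
end

section
/- Composition of linear functions between coherence spaces corresponds to relational composition of traces: if f : Cl(X) → Cl(Y) and g : Cl(Y) → Cl(Z) are linear, then g ∘ f is linear and tr(g ∘ f) = tr(g) ∘ tr(f) = {(a,c) : ∃ b, (a,b) ∈ tr(f) and (b,c) ∈ tr(g)}. -/
/-- A coherence space. -/
structure CoherenceSpace where
  web : Type
  countable : Countable web
  coh : web → web → Prop
  refl : ∀ a, coh a a
  symm : ∀ a b, coh a b → coh b a

/-- The cliques of a coherence space, ordered by inclusion. -/
def Clique (X : CoherenceSpace) := {x : Set X.web // x.Pairwise X.coh}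

instance {X : CoherenceSpace} : PartialOrder (Clique X) :=
  inferInstanceAs (PartialOrder {x : Set X.web // x.Pairwise X.coh})

/-- The empty clique. -/
def emptyClique (X : CoherenceSpace) : Clique X := ⟨∅, Set.pairwise_empty _⟩

/-- The singleton clique on a token. -/
def singClique (X : CoherenceSpace) (a : X.web) : Clique X :=
  ⟨{a}, Set.pairwise_singleton a _⟩

/-- Compatibility of cliques. -/
def Compat {X : CoherenceSpace} (x y : Set X.web) : Prop := (x ∪ y).Pairwise X.coh

/-- Linearity of a function between clique spaces: strict, Scott continuous, stable, and
preserving unions of compatible cliques. -/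
def IsLinear {X Y : CoherenceSpace} (f : Clique X → Clique Y) : Prop :=
  f (emptyClique X) = emptyClique Y ∧
  ScottContinuous f ∧
  (∀ x y z : Clique X, Compat x.1 y.1 → z.1 = x.1 ∩ y.1 → (f z).1 = (f x).1 ∩ (f y).1) ∧
  (∀ x y w : Clique X, Compat x.1 y.1 → w.1 = x.1 ∪ y.1 → (f w).1 = (f x).1 ∪ (f y).1)

/-!
By Scott continuity `f x` is the supremum of `f` over the finite subcliques of `x`, and by
preservation of compatible unions `f` of a finite clique is the union of `f` on its tokens;
hence `f x = ⋃_{a ∈ x} f {a}`. Applied to `g` at the clique `f {a}` this is the trace formula.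
Linearity of `g ∘ f` is checked clause by clause, using that `f` maps compatible cliques to
compatible ones.
-/

namespace Clique

variable {X : CoherenceSpace}

def finiteSubcliques (x : Clique X) : Set (Clique X) := {s | s.1 ⊆ x.1 ∧ s.1.Finite}

lemma finiteSubcliques_nonempty (x : Clique X) : (finiteSubcliques x).Nonempty :=
  ⟨emptyClique X, Set.empty_subset _, Set.finite_empty⟩

lemma directedOn_finiteSubcliques (x : Clique X) : DirectedOn (· ≤ ·) (finiteSubcliques x) := by
  rintro s ⟨hsx, hs⟩ t ⟨htx, ht⟩
  exact ⟨⟨s.1 ∪ t.1, x.2.mono (Set.union_subset hsx htx)⟩,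
    ⟨Set.union_subset hsx htx, hs.union ht⟩, Set.subset_union_left, Set.subset_union_right⟩

lemma isLUB_finiteSubcliques (x : Clique X) : IsLUB (finiteSubcliques x) x := by
  refine ⟨fun s hs => hs.1, fun z hz a ha => ?_⟩
  exact hz (show singClique X a ∈ finiteSubcliques x from
    ⟨Set.singleton_subset_iff.mpr ha, Set.finite_singleton a⟩) rfl

end Clique

namespace IsLinear

open Clique

variable {X Y Z : CoherenceSpace}

lemma monotone {f : Clique X → Clique Y} (hf : IsLinear f) : Monotone f :=
  hf.2.1.monotone

lemma compat_apply {f : Clique X → Clique Y} (hf : IsLinear f) {x y : Clique X}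
    (hxy : Compat x.1 y.1) : Compat (f x).1 (f y).1 := by
  rw [Compat, ← hf.2.2.2 x y ⟨x.1 ∪ y.1, hxy⟩ hxy rfl]
  exact (f _).2

lemma comp {f : Clique X → Clique Y} {g : Clique Y → Clique Z} (hg : IsLinear g)
    (hf : IsLinear f) : IsLinear (g ∘ f) := by
  refine ⟨?_, hf.2.1.comp hg.2.1, ?_, ?_⟩
  · simp only [Function.comp_apply, hf.1, hg.1]
  · intro x y z hxy hz
    exact hg.2.2.1 _ _ _ (hf.compat_apply hxy) (hf.2.2.1 x y z hxy hz)
  · intro x y w hxy hw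
    exact hg.2.2.2 _ _ _ (hf.compat_apply hxy) (hf.2.2.2 x y w hxy hw)

lemma apply_eq_biUnion_of_finite {f : Clique X → Clique Y} (hf : IsLinear f)
    {s : Set X.web} (hfin : s.Finite) (hs : s.Pairwise X.coh) :
    (f ⟨s, hs⟩).1 = ⋃ a ∈ s, (f (singClique X a)).1 := by
  induction s, hfin using Set.Finite.induction_on with
  | empty =>
    rw [show (⟨∅, hs⟩ : Clique X) = emptyClique X from rfl, hf.1]
    simp [emptyClique]
  | @insert a t _ _ ih =>
    have ht : t.Pairwise X.coh := hs.mono (Set.subset_insert a t)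
    have hat : Compat (singClique X a).1 (⟨t, ht⟩ : Clique X).1 := by
      simpa [Compat, singClique] using hs
    rw [hf.2.2.2 _ _ ⟨insert a t, hs⟩ hat Set.singleton_union.symm, ih ht, Set.biUnion_insert]

lemma apply_eq_biUnion {f : Clique X → Clique Y} (hf : IsLinear f) (x : Clique X) :
    (f x).1 = ⋃ a ∈ x.1, (f (singClique X a)).1 := by
  have hsub : (⋃ a ∈ x.1, (f (singClique X a)).1) ⊆ (f x).1 :=
    Set.iUnion₂_subset fun a ha => hf.monotone (Set.singleton_subset_iff.mpr ha)
  refine hsub.antisymm' ?_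
  have hlub := hf.2.1 (finiteSubcliques_nonempty x) (directedOn_finiteSubcliques x)
    (isLUB_finiteSubcliques x)
  have hbound :
      (⟨_, (f x).2.mono hsub⟩ : Clique Y) ∈ upperBounds (f '' finiteSubcliques x) := by
    rintro _ ⟨s, ⟨hsx, hfin⟩, rfl⟩
    exact (hf.apply_eq_biUnion_of_finite hfin s.2).le.trans (Set.biUnion_subset_biUnion_left hsx)
  exact hlub.2 hbound

end IsLinear

/-- Composition of linear maps between coherence spaces is linear, and corresponds to
relational composition of traces:
`tr(g ∘ f) = {(a,c) : ∃ b, (a,b) ∈ tr(f) ∧ (b,c) ∈ tr(g)}`. -/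
theorem comp_linear_trace {X Y Z : CoherenceSpace}
    (f : Clique X → Clique Y) (g : Clique Y → Clique Z)
    (hf : IsLinear f) (hg : IsLinear g) :
    IsLinear (g ∘ f) ∧
    ∀ (a : X.web) (c : Z.web),
      c ∈ (g (f (singClique X a))).1 ↔
        ∃ b : Y.web, b ∈ (f (singClique X a)).1 ∧ c ∈ (g (singClique Y b)).1 := by
  refine ⟨hg.comp hf, fun a c => ?_⟩
  rw [hg.apply_eq_biUnion (f (singClique X a)), Set.mem_iUnion₂]
  simp only [exists_prop]
end
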